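/- Let u be a minimizer of F_H^{con} and let D=D(u). Then there exist vectors β_k∈argmax_{b∈B_k}⟨b,u⟩, k=1,…,m, such that for every x_i∈D∖L: Σ_{k : x_i∈e_k} w_k·|β_k(x_i)|·φ_p( max_{x_j∈e_k∩D}u(x_j) + min_{x_j∈e_k∩D}u(x_j) − 2u(x_i) ) = 0, where φ_p(s)=|s|^{p−2}s for s≠0 and φ_p(0)=0. -/

import Mathlib

open Finset

/-- A finite hypergraph on vertex set `V` with `m` hyperedges:
each hyperedge is a nonempty finite set of vertices and carries a positive weight. -/
structure WeightedHypergraph (V : Type*) [Fintype V] (m : ℕ) where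
  e : Fin m → Finset V
  w : Fin m → ℝ
  e_nonempty : ∀ k, (e k).Nonempty
  w_pos : ∀ k, 0 < w k

variable {V : Type*} [Fintype V] {m : ℕ}

/-- Maximal oscillation of `u` on the hyperedge `e k`:
`max_{x_i, x_j ∈ e_k} |u x_i - u x_j|`. -/
noncomputable def osc (H : WeightedHypergraph V m) (u : V → ℝ) (k : Fin m) : ℝ :=
  (H.e k ×ˢ H.e k).sup' ((H.e_nonempty k).product (H.e_nonempty k))
    (fun q => |u q.1 - u q.2|)

/-- The hypergraph p-Laplacian regularizer
`F_H(u) = ∑ k w_k (max_{x_i,x_j ∈ e_k} |u x_i - u x_j|)^p`. -/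
noncomputable def FH (H : WeightedHypergraph V m) (p : ℝ) (u : V → ℝ) : ℝ :=
  ∑ k : Fin m, H.w k * (osc H u k) ^ p

/-- `u` is admissible for the labeled set `L` with labels `y`. -/
def Admissible (L : Finset V) (y u : V → ℝ) : Prop := ∀ x ∈ L, u x = y x

/-- `u` is a minimizer of the constrained functional `F_H^{con}`. -/
def IsMinimizer (H : WeightedHypergraph V m) (p : ℝ) (L : Finset V) (y u : V → ℝ) : Prop :=
  Admissible L y u ∧ ∀ v : V → ℝ, Admissible L y v → FH H p u ≤ FH H p v

/-- Connectivity of a hypergraph: any two vertices are linked by a chain of hyperedges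
with consecutive nonempty intersections. -/
def WeightedHypergraph.Connected [DecidableEq V] (H : WeightedHypergraph V m) : Prop :=
  ∀ x y : V, ∃ l : ℕ, ∃ ks : Fin (l + 1) → Fin m,
    x ∈ H.e (ks 0) ∧ y ∈ H.e (ks (Fin.last l)) ∧
    ∀ i : Fin l, (H.e (ks i.castSucc) ∩ H.e (ks i.succ)).Nonempty

/-- The set `D(u)` of vertices whose values are rigid: labeled vertices together with the
unlabeled vertices at which every sufficiently small perturbation strictly increases `F_H`. -/
def Dset [DecidableEq V] (H : WeightedHypergraph V m) (p : ℝ) (L : Finset V) (u : V → ℝ) : Set V :=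
  {x | x ∈ L ∨ (x ∉ L ∧ ∃ δ > (0 : ℝ), ∀ ε : ℝ, 0 < |ε| → |ε| < δ →
    FH H p u < FH H p (Function.update u x (u x + ε)))}

/-- φ_p(s) = |s|^{p-2} s for s ≠ 0 and φ_p(0) = 0. -/
noncomputable def phiP (p s : ℝ) : ℝ := if s = 0 then 0 else |s| ^ (p - 2) * s

/-- The simplified hypergraph p-Laplacian operator. -/
noncomputable def LpH [DecidableEq V] (H : WeightedHypergraph V m) (p : ℝ) (u : V → ℝ) (x : V) : ℝ :=
  ∑ k ∈ Finset.univ.filter (fun k => x ∈ H.e k),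
    H.w k * phiP p ((H.e k).sup' (H.e_nonempty k) u + (H.e k).inf' (H.e_nonempty k) u - 2 * u x)

/-- The indicator vector `𝟙_x ∈ ℝ^V`. -/
def ind [DecidableEq V] (x : V) : V → ℝ := fun z => if z = x then 1 else 0

/-- Euclidean inner product on `ℝ^V`. -/
noncomputable def ip (b u : V → ℝ) : ℝ := ∑ x : V, b x * u x

/-- `B_e = conv {𝟙_{x_i} - 𝟙_{x_j} : x_i, x_j ∈ e}`. -/
def Bset [DecidableEq V] (e : Finset V) : Set (V → ℝ) :=
  convexHull ℝ {b | ∃ xi ∈ e, ∃ xj ∈ e, b = ind xi - ind xj}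

/-!
For small `t ≥ 0` the oscillation of `u + t • v` on `e_k` is exactly `osc_k + t s_k(v)`, where
`s_k(v)` is the largest `v a - v b` over the pairs `(a, b)` realizing the oscillation of `u` on
`e_k`. At a minimizer the right derivative `p ∑ w_k osc_k^(p-1) s_k(v)` of `F_H` in every direction
`v` vanishing on `L` is therefore nonnegative; by a separation argument in `ℝ^V` there are `β_k` in
the faces `conv {𝟙_a - 𝟙_b : (a, b) realizes osc_k}` of `B_k` with `∑ w_k osc_k^(p-1) β_k = 0`
off `L`. Such a `β_k` maximizes `⟨·, u⟩` on `B_k`, is `≥ 0` at the maximizers and `≤ 0` at the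
minimizers of `u` on `e_k` and vanishes elsewhere, so this balance is the claimed equation once the
maximum and the minimum of `u` on a non-constant edge are known to be attained in `D`. That comes
from strict convexity of `s ↦ s ^ p`: at a vertex `z ∉ D` one of the directions `±𝟙_z` leaves every
`s_k` at zero, so if no maximizer of `u` on `e_k` were in `D`, lowering all of them at once would
decrease `F_H` to first order.
-/

open Filter Topology

theorem Finset.eventually_sup'_add_smul {ι : Type*} {s : Finset ι} (hs : s.Nonempty) (f g : ι → ℝ)
    (hmax : {i ∈ s | f i = s.sup' hs f}.Nonempty) :
    ∀ᶠ t in 𝓝[≥] (0 : ℝ),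
      s.sup' hs (f + t • g) = s.sup' hs f + t * {i ∈ s | f i = s.sup' hs f}.sup' hmax g := by
  set M := s.sup' hs f
  set a := {i ∈ s | f i = M}.sup' hmax g
  have hlow : ∀ᶠ t in 𝓝 (0 : ℝ), ∀ i ∈ s, f i < M → f i + t * g i < M + t * a := by
    refine (eventually_all_finset s).2 fun i _ => ?_
    by_cases hi : f i < M
    · exact (ContinuousAt.eventually_lt (by fun_prop) (by fun_prop) (by simpa using hi)).mono
        fun t ht _ => ht
    · exact Eventually.of_forall fun t h => absurd h hi
  filter_upwards [nhdsWithin_le_nhds hlow, self_mem_nhdsWithin] with t hlow (ht : 0 ≤ t)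
  apply le_antisymm
  · refine sup'_le hs _ fun i hi => ?_
    rcases (le_sup' f hi).lt_or_eq with hlt | heq
    · exact (hlow i hi hlt).le
    · have : g i ≤ a := le_sup' g (mem_filter.2 ⟨hi, heq⟩)
      simp only [Pi.add_apply, Pi.smul_apply, smul_eq_mul, heq]
      gcongr
  · obtain ⟨i, hi, hia⟩ := exists_mem_eq_sup' hmax g
    obtain ⟨his, hiM⟩ := mem_filter.1 hi
    calc M + t * a = (f + t • g) i := by simp [show a = g i from hia, hiM]
      _ ≤ _ := le_sup' _ his

theorem rpow_midpoint_lt {p a b : ℝ} (hp : 1 < p) (ha : 0 ≤ a) (hb : 0 ≤ b) (hab : a ≠ b) :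
    ((a + b) / 2) ^ p < (a ^ p + b ^ p) / 2 := by
  have := (strictConvexOn_rpow hp).2 ha hb hab (by norm_num : (0 : ℝ) < 1 / 2)
    (by norm_num : (0 : ℝ) < 1 / 2) (by norm_num)
  simp only [smul_eq_mul] at this
  calc ((a + b) / 2) ^ p = (1 / 2 * a + 1 / 2 * b) ^ p := by ring_nf
    _ < 1 / 2 * a ^ p + 1 / 2 * b ^ p := this
    _ = (a ^ p + b ^ p) / 2 := by ring

theorem sum_mul_rpow_midpoint_lt {ι : Type*} [Fintype ι] {p t : ℝ} (hp : 1 < p) (ht : 0 < t)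
    {w a s : ι → ℝ} (hw : ∀ i, 0 < w i) (ha : ∀ i, 0 ≤ a i) (has : ∀ i, 0 ≤ a i + t * s i)
    (hs : ∃ i, s i ≠ 0) :
    ∑ i, w i * (a i + t / 2 * s i) ^ p <
      (∑ i, w i * a i ^ p + ∑ i, w i * (a i + t * s i) ^ p) / 2 := by
  have hterm : ∀ i, s i ≠ 0 →
      w i * (a i + t / 2 * s i) ^ p < (w i * a i ^ p + w i * (a i + t * s i) ^ p) / 2 := by
    intro i hi
    have hne : a i ≠ a i + t * s i := by simpa using mul_ne_zero ht.ne' hi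
    calc w i * (a i + t / 2 * s i) ^ p = w i * ((a i + (a i + t * s i)) / 2) ^ p := by ring_nf
      _ < w i * ((a i ^ p + (a i + t * s i) ^ p) / 2) :=
          mul_lt_mul_of_pos_left (rpow_midpoint_lt hp (ha i) (has i) hne) (hw i)
      _ = _ := by ring
  obtain ⟨i₀, hi₀⟩ := hs
  rw [← sum_add_distrib, sum_div]
  refine sum_lt_sum (fun i _ => ?_) ⟨i₀, mem_univ _, hterm i₀ hi₀⟩
  by_cases hi : s i = 0
  · simp [hi]
  · exact (hterm i hi).le

theorem exists_mem_eq_zero_off_of_dotProduct_nonneg {ι : Type*} [Fintype ι] [DecidableEq ι]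
    {C : Set (ι → ℝ)} (hCc : IsCompact C) (hC : Convex ℝ C) (L : Finset ι)
    (h : ∀ v : ι → ℝ, (∀ x ∈ L, v x = 0) → ∃ g ∈ C, 0 ≤ g ⬝ᵥ v) :
    ∃ g ∈ C, ∀ x ∉ L, g x = 0 := by
  let π : (ι → ℝ) →ₗ[ℝ] ι → ℝ := LinearMap.pi fun x => if x ∈ L then 0 else LinearMap.proj x
  have hπ : ∀ g x, π g x = if x ∈ L then 0 else g x := fun g x => by
    by_cases hx : x ∈ L <;> simp [π, hx]
  by_contra! hC0
  have h0 : (0 : ι → ℝ) ∉ π '' C := by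
    rintro ⟨g, hg, hπg⟩
    obtain ⟨x, hx, hgx⟩ := hC0 g hg
    exact hgx (by simpa [hπ, hx] using congrFun hπg x)
  obtain ⟨f, s, hf0, hfC⟩ := geometric_hahn_banach_point_closed (hC.linear_image π)
    (hCc.image π.continuous_of_finiteDimensional).isClosed h0
  set v : ι → ℝ := fun x => if x ∈ L then 0 else -f fun j => if x = j then 1 else 0
  obtain ⟨g, hg, hgv⟩ := h v fun x hx => if_pos hx
  have hfπ : f (π g) = -(g ⬝ᵥ v) := by
    rw [← ContinuousLinearMap.coe_coe, LinearMap.pi_apply_eq_sum_univ, dotProduct, ← sum_neg_distrib]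
    refine sum_congr rfl fun x _ => ?_
    by_cases hx : x ∈ L <;> simp [hπ, v, hx]
  have := hfC _ (Set.mem_image_of_mem π hg)
  rw [map_zero] at hf0
  linarith

section Indicator

variable {X : Type*} [DecidableEq X]

theorem update_add_eq_add_smul_ind (u : X → ℝ) (x : X) (ε : ℝ) :
    Function.update u x (u x + ε) = u + ε • ind x := by
  ext z
  by_cases h : z = x <;> simp [ind, Function.update, h]

theorem sum_ind_apply (S : Finset X) (x : X) : (∑ z ∈ S, ind z) x = if x ∈ S then 1 else 0 := by
  simp [ind, Finset.sum_apply]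

theorem zero_mem_Bset {e : Finset X} (he : e.Nonempty) : (0 : X → ℝ) ∈ Bset e := by
  obtain ⟨a, ha⟩ := he
  exact subset_convexHull ℝ _ ⟨a, ha, a, ha, (sub_self _).symm⟩

end Indicator

theorem isLinearMap_ip (v : V → ℝ) : IsLinearMap ℝ fun b : V → ℝ => ip b v :=
  ⟨fun b c => add_dotProduct b c v, fun r b => smul_dotProduct r b v⟩

theorem phiP_of_pos {p s : ℝ} (hs : 0 < s) : phiP p s = s ^ (p - 1) := by
  rw [phiP, if_neg hs.ne', abs_of_pos hs, show p - 1 = p - 2 + 1 by ring,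
    Real.rpow_add_one hs.ne']

theorem phiP_neg (p s : ℝ) : phiP p (-s) = -phiP p s := by
  by_cases hs : s = 0 <;> simp [phiP, hs]

section Oscillation

variable (H : WeightedHypergraph V m) (u : V → ℝ)

theorem osc_eq_sup'_sub (k : Fin m) :
    osc H u k = (H.e k ×ˢ H.e k).sup' ((H.e_nonempty k).product (H.e_nonempty k))
      (fun q => u q.1 - u q.2) := by
  apply le_antisymm
  · refine sup'_le _ _ fun q hq => abs_le.2 ⟨?_, le_sup' (fun q : V × V => u q.1 - u q.2) hq⟩
    have := le_sup' (fun q : V × V => u q.1 - u q.2)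
      (mk_mem_product (mem_product.1 hq).2 (mem_product.1 hq).1)
    linarith
  · exact sup'_mono_fun fun q _ => le_abs_self _

theorem osc_eq_sup'_sub_inf' (k : Fin m) :
    osc H u k = (H.e k).sup' (H.e_nonempty k) u - (H.e k).inf' (H.e_nonempty k) u := by
  rw [osc_eq_sup'_sub]
  apply le_antisymm
  · exact sup'_le _ _ fun q hq =>
      sub_le_sub (le_sup' u (mem_product.1 hq).1) (inf'_le u (mem_product.1 hq).2)
  · obtain ⟨a, ha, hMa⟩ := exists_mem_eq_sup' (H.e_nonempty k) u
    obtain ⟨b, hb, hmb⟩ := exists_mem_eq_inf' (H.e_nonempty k) u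
    rw [hMa, hmb]
    exact le_sup' (fun q : V × V => u q.1 - u q.2) (mk_mem_product ha hb)

theorem osc_nonneg (k : Fin m) : 0 ≤ osc H u k := by
  obtain ⟨a, ha⟩ := H.e_nonempty k
  exact (abs_nonneg _).trans (le_sup' (fun q : V × V => |u q.1 - u q.2|) (mk_mem_product ha ha))

noncomputable def activePairs (k : Fin m) : Finset (V × V) :=
  {q ∈ H.e k ×ˢ H.e k | u q.1 - u q.2 = osc H u k}

theorem mem_activePairs {k : Fin m} {q : V × V} :
    q ∈ activePairs H u k ↔ (q.1 ∈ H.e k ∧ u q.1 = (H.e k).sup' (H.e_nonempty k) u) ∧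
      (q.2 ∈ H.e k ∧ u q.2 = (H.e k).inf' (H.e_nonempty k) u) := by
  rw [activePairs, mem_filter, mem_product, osc_eq_sup'_sub_inf']
  constructor
  · rintro ⟨⟨h1, h2⟩, h⟩
    have := le_sup' u h1
    have := inf'_le u h2
    exact ⟨⟨h1, by linarith⟩, h2, by linarith⟩
  · rintro ⟨⟨h1, e1⟩, h2, e2⟩
    exact ⟨⟨h1, h2⟩, by rw [e1, e2]⟩

theorem activePairs_nonempty (k : Fin m) : (activePairs H u k).Nonempty := by
  obtain ⟨a, ha, hMa⟩ := exists_mem_eq_sup' (H.e_nonempty k) u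
  obtain ⟨b, hb, hmb⟩ := exists_mem_eq_inf' (H.e_nonempty k) u
  exact ⟨(a, b), (mem_activePairs H u).2 ⟨⟨ha, hMa.symm⟩, hb, hmb.symm⟩⟩

noncomputable def oscSlope (v : V → ℝ) (k : Fin m) : ℝ :=
  (activePairs H u k).sup' (activePairs_nonempty H u k) fun q => v q.1 - v q.2

theorem sub_le_oscSlope {k : Fin m} {q : V × V} (hq : q ∈ activePairs H u k) (v : V → ℝ) :
    v q.1 - v q.2 ≤ oscSlope H u v k :=
  le_sup' (fun q : V × V => v q.1 - v q.2) hq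

theorem oscSlope_le {k : Fin m} {v : V → ℝ} {c : ℝ}
    (h : ∀ q ∈ activePairs H u k, v q.1 - v q.2 ≤ c) : oscSlope H u v k ≤ c :=
  sup'_le _ _ h

theorem oscSlope_sum_le {ι : Type*} (T : Finset ι) (d : ι → V → ℝ) (k : Fin m) :
    oscSlope H u (∑ i ∈ T, d i) k ≤ ∑ i ∈ T, oscSlope H u (d i) k := by
  refine le_sum_of_subadditive (oscSlope H u · k) (oscSlope_le H u fun q _ => by simp)
    (fun v w => oscSlope_le H u fun q hq => ?_) T d
  simpa [add_sub_add_comm] using add_le_add (sub_le_oscSlope H u hq v) (sub_le_oscSlope H u hq w)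

theorem apply_snd_lt_apply_fst {k : Fin m} (hk : 0 < osc H u k) {q : V × V}
    (hq : q ∈ activePairs H u k) : u q.2 < u q.1 := by
  linarith [(mem_filter.1 hq).2]

theorem fst_ne_snd_of_mem_activePairs {k : Fin m} (hk : 0 < osc H u k) {q : V × V}
    (hq : q ∈ activePairs H u k) : q.1 ≠ q.2 := fun h =>
  (apply_snd_lt_apply_fst H u hk hq).ne (congrArg u h.symm)

theorem eventually_osc_add_smul (v : V → ℝ) (k : Fin m) :
    ∀ᶠ t in 𝓝[≥] (0 : ℝ), osc H (u + t • v) k = osc H u k + t * oscSlope H u v k := by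
  have key := Finset.eventually_sup'_add_smul _ (fun q : V × V => u q.1 - u q.2)
    (fun q => v q.1 - v q.2) (by rw [← osc_eq_sup'_sub]; exact activePairs_nonempty H u k)
  filter_upwards [key] with t ht
  simp only [oscSlope, activePairs, osc_eq_sup'_sub]
  convert ht using 2 with q
  simp only [Pi.add_apply, Pi.smul_apply, smul_eq_mul]
  ring

theorem eventually_FH_add_smul (p : ℝ) (v : V → ℝ) :
    ∀ᶠ t in 𝓝[≥] (0 : ℝ),
      FH H p (u + t • v) = ∑ k, H.w k * (osc H u k + t * oscSlope H u v k) ^ p := by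
  filter_upwards [eventually_all.2 fun k => eventually_osc_add_smul H u v k] with t ht
  simp only [FH, ht]

end Oscillation

section Face

variable [DecidableEq V] (H : WeightedHypergraph V m) (u : V → ℝ)

theorem ip_ind_sub_ind (a b : V) (v : V → ℝ) : ip (ind a - ind b) v = v a - v b := by
  simp [ip, ind, sub_mul, sum_sub_distrib]

theorem ip_le_osc_of_mem_Bset {k : Fin m} {b : V → ℝ} (hb : b ∈ Bset (H.e k)) :
    ip b u ≤ osc H u k := by
  refine convexHull_min ?_ (convex_halfSpace_le (isLinearMap_ip u) _) hb
  rintro _ ⟨a, ha, c, hc, rfl⟩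
  rw [Set.mem_ofPred_eq, ip_ind_sub_ind, osc_eq_sup'_sub_inf']
  exact sub_le_sub (le_sup' u ha) (inf'_le u hc)

noncomputable def activeFace (k : Fin m) : Set (V → ℝ) :=
  convexHull ℝ ((fun q : V × V => ind q.1 - ind q.2) '' activePairs H u k)

variable {H u} {k : Fin m} {g : V → ℝ}

theorem activeFace_subset_Bset : activeFace H u k ⊆ Bset (H.e k) := by
  refine convexHull_mono ?_
  rintro _ ⟨q, hq, rfl⟩
  obtain ⟨⟨h₁, -⟩, h₂, -⟩ := (mem_activePairs H u).1 hq
  exact ⟨q.1, h₁, q.2, h₂, rfl⟩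

theorem ip_eq_osc_of_mem_activeFace (hg : g ∈ activeFace H u k) : ip g u = osc H u k := by
  refine convexHull_min ?_ (convex_hyperplane (isLinearMap_ip u) _) hg
  rintro _ ⟨q, hq, rfl⟩
  rw [Set.mem_ofPred_eq, ip_ind_sub_ind]
  exact (mem_filter.1 hq).2

theorem apply_nonneg_of_mem_activeFace (hg : g ∈ activeFace H u k) {x : V}
    (hx : ∀ q ∈ activePairs H u k, q.2 ≠ x) : 0 ≤ g x := by
  refine convexHull_min ?_ ((convex_Ici 0).linear_preimage (LinearMap.proj x)) hg
  rintro _ ⟨q, hq, rfl⟩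
  simp only [Set.mem_preimage, LinearMap.proj_apply, Pi.sub_apply, ind, if_neg (hx q hq).symm]
  split_ifs <;> norm_num

theorem apply_nonpos_of_mem_activeFace (hg : g ∈ activeFace H u k) {x : V}
    (hx : ∀ q ∈ activePairs H u k, q.1 ≠ x) : g x ≤ 0 := by
  refine convexHull_min ?_ ((convex_Iic 0).linear_preimage (LinearMap.proj x)) hg
  rintro _ ⟨q, hq, rfl⟩
  simp only [Set.mem_preimage, LinearMap.proj_apply, Pi.sub_apply, ind, if_neg (hx q hq).symm]
  split_ifs <;> norm_num

theorem apply_eq_zero_of_mem_activeFace (hg : g ∈ activeFace H u k) {x : V} (hx : x ∉ H.e k) :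
    g x = 0 := by
  have hmem : ∀ q ∈ activePairs H u k, q.1 ∈ H.e k ∧ q.2 ∈ H.e k := fun q hq =>
    ⟨((mem_activePairs H u).1 hq).1.1, ((mem_activePairs H u).1 hq).2.1⟩
  exact le_antisymm (apply_nonpos_of_mem_activeFace hg fun q hq h => hx (h ▸ (hmem q hq).1))
    (apply_nonneg_of_mem_activeFace hg fun q hq h => hx (h ▸ (hmem q hq).2))

theorem abs_mul_phiP_of_mem_activeFace (p : ℝ) (hk : 0 < osc H u k)
    (hg : g ∈ activeFace H u k) (x : V) :
    |g x| * phiP p ((H.e k).sup' (H.e_nonempty k) u + (H.e k).inf' (H.e_nonempty k) u - 2 * u x) =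
      -(osc H u k ^ (p - 1) * g x) := by
  have hosc := osc_eq_sup'_sub_inf' H u k
  have hval : ∀ q ∈ activePairs H u k,
      u q.2 < u q.1 ∧ u q.1 = (H.e k).sup' (H.e_nonempty k) u ∧
        u q.2 = (H.e k).inf' (H.e_nonempty k) u := fun q hq =>
    ⟨apply_snd_lt_apply_fst H u hk hq, ((mem_activePairs H u).1 hq).1.2,
      ((mem_activePairs H u).1 hq).2.2⟩
  by_cases hmax : x ∈ H.e k ∧ u x = (H.e k).sup' (H.e_nonempty k) u
  · have : 0 ≤ g x := apply_nonneg_of_mem_activeFace hg fun q hq h => by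
      linarith [hval q hq, h ▸ hmax.2]
    rw [abs_of_nonneg this, hmax.2, show ∀ M m : ℝ, M + m - 2 * M = -(M - m) by intros; ring,
      ← hosc, phiP_neg, phiP_of_pos hk]
    ring
  by_cases hmin : x ∈ H.e k ∧ u x = (H.e k).inf' (H.e_nonempty k) u
  · have : g x ≤ 0 := apply_nonpos_of_mem_activeFace hg fun q hq h => by
      linarith [hval q hq, h ▸ hmin.2]
    rw [abs_of_nonpos this, hmin.2, show ∀ M m : ℝ, M + m - 2 * m = M - m by intros; ring,
      ← hosc, phiP_of_pos hk]
    ring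
  have : g x = 0 := le_antisymm
    (apply_nonpos_of_mem_activeFace hg fun q hq h => hmax (h ▸ ((mem_activePairs H u).1 hq).1))
    (apply_nonneg_of_mem_activeFace hg fun q hq h => hmin (h ▸ ((mem_activePairs H u).1 hq).2))
  simp [this]

end Face

section Minimizer

variable {H : WeightedHypergraph V m} {p : ℝ} {L : Finset V} {y u : V → ℝ}

theorem IsMinimizer.le_FH_add_smul (hu : IsMinimizer H p L y u) {v : V → ℝ}
    (hv : ∀ x ∈ L, v x = 0) (t : ℝ) : FH H p u ≤ FH H p (u + t • v) :=
  hu.2 _ fun x hx => by simp [hv x hx, hu.1 x hx]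

theorem IsMinimizer.sum_mul_oscSlope_nonneg (hp : 1 < p) (hu : IsMinimizer H p L y u)
    {v : V → ℝ} (hv : ∀ x ∈ L, v x = 0) :
    0 ≤ ∑ k, H.w k * osc H u k ^ (p - 1) * oscSlope H u v k := by
  set f : ℝ → ℝ := fun t => ∑ k, H.w k * (osc H u k + t * oscSlope H u v k) ^ p
  have hmin : IsLocalMinOn f (Set.Ici 0) 0 := by
    filter_upwards [eventually_FH_add_smul H u p v] with t ht
    simpa [f, FH, ← ht] using hu.le_FH_add_smul hv t
  have hderiv : HasDerivAt f (p * ∑ k, H.w k * osc H u k ^ (p - 1) * oscSlope H u v k) 0 := by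
    rw [mul_sum]
    refine HasDerivAt.fun_sum fun k _ => ?_
    have := ((((hasDerivAt_id (0 : ℝ)).mul_const (oscSlope H u v k)).const_add
      (osc H u k)).rpow_const (Or.inr hp.le)).const_mul (H.w k)
    refine this.congr_deriv ?_
    simp only [id, zero_mul, add_zero, one_mul]
    ring
  have h1 : (1 : ℝ) ∈ posTangentConeAt (Set.Ici 0) 0 :=
    mem_posTangentConeAt_of_segment_subset (by simp [segment_eq_Icc, Set.Icc_subset_Ici_self])
  have := hmin.hasFDerivWithinAt_nonneg hderiv.hasDerivWithinAt.hasFDerivWithinAt h1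
  exact nonneg_of_mul_nonneg_right (by simpa using this) (by linarith)

theorem IsMinimizer.eventually_oscSlope_eq_zero (hp : 1 < p) (hu : IsMinimizer H p L y u)
    {v : V → ℝ} (hv : ∀ x ∈ L, v x = 0) :
    ∀ᶠ t in 𝓝[>] (0 : ℝ), FH H p (u + t • v) ≤ FH H p u → ∀ k, oscSlope H u v k = 0 := by
  obtain ⟨t₀, ht₀, hsub⟩ := mem_nhdsGE_iff_exists_Ico_subset.1 ((eventually_FH_add_smul H u p v).and
    (eventually_all.2 fun k => eventually_osc_add_smul H u v k))
  filter_upwards [Ioo_mem_nhdsGT (show (0 : ℝ) < t₀ from ht₀)] with t ⟨ht, ht'⟩ hle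
  -- On `[0, t₀)` the map `τ ↦ F_H (u + τ • v)` is `∑ w_k (osc_k + τ s_k) ^ p`, strictly convex
  -- unless every `s_k` vanishes, while it is minimal at `0` and not larger at `t`.
  by_contra! hs
  have hconv := sum_mul_rpow_midpoint_lt hp ht H.w_pos (osc_nonneg H u)
    (fun k => (hsub ⟨ht.le, ht'⟩).2 k ▸ osc_nonneg H (u + t • v) k) hs
  rw [← (hsub ⟨ht.le, ht'⟩).1, ← (hsub ⟨by positivity, by linarith⟩).1] at hconv
  linarith [hu.le_FH_add_smul hv (t / 2), show FH H p u = ∑ k, H.w k * osc H u k ^ p from rfl]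

theorem IsMinimizer.oscSlope_ind_eq_zero_of_notMem_Dset [DecidableEq V] (hp : 1 < p)
    (hu : IsMinimizer H p L y u) {z : V} (hz : z ∉ Dset H p L u) :
    (∀ k, oscSlope H u (ind z) k = 0) ∨ ∀ k, oscSlope H u (-ind z) k = 0 := by
  have hzL : z ∉ L := fun h => hz (Or.inl h)
  have hind : ∀ x ∈ L, ind z x = 0 := fun x hx => if_neg (ne_of_mem_of_not_mem hx hzL)
  obtain ⟨δ, hδ, hsub⟩ := mem_nhdsGT_iff_exists_Ioo_subset.1
    ((hu.eventually_oscSlope_eq_zero hp hind).and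
      (hu.eventually_oscSlope_eq_zero hp (v := -ind z) (by simpa using hind)))
  have : ¬ ∀ ε : ℝ, 0 < |ε| → |ε| < δ → FH H p u < FH H p (Function.update u z (u z + ε)) :=
    fun h => hz (Or.inr ⟨hzL, δ, hδ, h⟩)
  push Not at this
  obtain ⟨ε, hε, hεδ, hle⟩ := this
  rw [update_add_eq_add_smul_ind] at hle
  rcases lt_or_gt_of_ne (abs_pos.1 hε) with hneg | hpos
  · rw [abs_of_neg hneg] at hεδ
    exact Or.inr ((hsub ⟨neg_pos.2 hneg, hεδ⟩).2 (by simpa using hle))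
  · rw [abs_of_pos hpos] at hεδ
    exact Or.inl ((hsub ⟨hpos, hεδ⟩).1 hle)

theorem IsMinimizer.oscSlope_eq_zero_of_forall_nonpos (hp : 1 < p) (hu : IsMinimizer H p L y u)
    {v : V → ℝ} (hv : ∀ x ∈ L, v x = 0) (hnonpos : ∀ j, oscSlope H u v j ≤ 0) {k : Fin m}
    (hk : 0 < osc H u k) : oscSlope H u v k = 0 := by
  have hc : ∀ j, 0 ≤ H.w j * osc H u j ^ (p - 1) :=
    fun j => mul_nonneg (H.w_pos j).le (Real.rpow_nonneg (osc_nonneg H u j) _)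
  have hterm : ∀ j ∈ univ, H.w j * osc H u j ^ (p - 1) * oscSlope H u v j ≤ 0 :=
    fun j _ => mul_nonpos_of_nonneg_of_nonpos (hc j) (hnonpos j)
  have hzero := (sum_eq_zero_iff_of_nonpos hterm).1
    (le_antisymm (sum_nonpos hterm) (hu.sum_mul_oscSlope_nonneg hp hv)) k (mem_univ k)
  exact (mul_eq_zero.1 hzero).resolve_left
    (mul_pos (H.w_pos k) (Real.rpow_pos_of_pos hk _)).ne'

theorem IsMinimizer.oscSlope_sum_eq_zero (hp : 1 < p) (hu : IsMinimizer H p L y u)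
    {ι : Type*} (T : Finset ι) (d : ι → V → ℝ) (hdL : ∀ i ∈ T, ∀ x ∈ L, d i x = 0)
    (hd : ∀ i ∈ T, ∀ j, oscSlope H u (d i) j = 0) {k : Fin m} (hk : 0 < osc H u k) :
    oscSlope H u (∑ i ∈ T, d i) k = 0 :=
  hu.oscSlope_eq_zero_of_forall_nonpos hp
    (fun x hx => by simp [Finset.sum_apply, sum_eq_zero fun i hi => hdL i hi x hx])
    (fun j => (oscSlope_sum_le H u T d j).trans (sum_eq_zero fun i hi => hd i hi j).le) hk

theorem IsMinimizer.exists_mem_Dset_eq_sup' [DecidableEq V] (hp : 1 < p)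
    (hu : IsMinimizer H p L y u) {k : Fin m} (hk : 0 < osc H u k) :
    ∃ a ∈ H.e k, a ∈ Dset H p L u ∧ u a = (H.e k).sup' (H.e_nonempty k) u := by
  by_contra! h
  set S := {a ∈ H.e k | u a = (H.e k).sup' (H.e_nonempty k) u}
  have hSD : ∀ z ∈ S, z ∉ Dset H p L u :=
    fun z hz hD => h z (mem_filter.1 hz).1 hD (mem_filter.1 hz).2
  have hflat : ∀ z ∈ S, ∀ j, oscSlope H u (-ind z) j = 0 := by
    intro z hz
    refine (hu.oscSlope_ind_eq_zero_of_notMem_Dset hp (hSD z hz)).resolve_left fun h0 => ?_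
    obtain ⟨b, hb, hbm⟩ := exists_mem_eq_inf' (H.e_nonempty k) u
    have hq : (z, b) ∈ activePairs H u k :=
      (mem_activePairs H u).2 ⟨mem_filter.1 hz, hb, hbm.symm⟩
    have := sub_le_oscSlope H u hq (ind z)
    norm_num [ind, (fst_ne_snd_of_mem_activePairs H u hk hq).symm, h0 k] at this
  -- Lowering all maximizers together is flat, yet it lowers the maximum of `u` on `e_k` and
  -- not its minimum.
  have h0 := hu.oscSlope_sum_eq_zero hp S (fun z => -ind z)
    (fun z hz x hx => by simp [ind, ne_of_mem_of_not_mem hx fun hL => hSD z hz (Or.inl hL)])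
    hflat hk
  have : oscSlope H u (∑ z ∈ S, -ind z) k ≤ -1 := oscSlope_le H u fun q hq => by
    have hS₁ : q.1 ∈ S := mem_filter.2 ((mem_activePairs H u).1 hq).1
    have hS₂ : q.2 ∉ S := fun h => by
      linarith [(mem_filter.1 h).2, (mem_filter.1 hS₁).2, apply_snd_lt_apply_fst H u hk hq]
    rw [sum_neg_distrib, Pi.neg_apply, Pi.neg_apply, sum_ind_apply, sum_ind_apply, if_pos hS₁,
      if_neg hS₂]
    norm_num
  linarith

theorem IsMinimizer.exists_mem_Dset_eq_inf' [DecidableEq V] (hp : 1 < p)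
    (hu : IsMinimizer H p L y u) {k : Fin m} (hk : 0 < osc H u k) :
    ∃ b ∈ H.e k, b ∈ Dset H p L u ∧ u b = (H.e k).inf' (H.e_nonempty k) u := by
  by_contra! h
  set S := {b ∈ H.e k | u b = (H.e k).inf' (H.e_nonempty k) u}
  have hSD : ∀ z ∈ S, z ∉ Dset H p L u :=
    fun z hz hD => h z (mem_filter.1 hz).1 hD (mem_filter.1 hz).2
  have hflat : ∀ z ∈ S, ∀ j, oscSlope H u (ind z) j = 0 := by
    intro z hz
    refine (hu.oscSlope_ind_eq_zero_of_notMem_Dset hp (hSD z hz)).resolve_right fun h0 => ?_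
    obtain ⟨a, ha, haM⟩ := exists_mem_eq_sup' (H.e_nonempty k) u
    have hq : (a, z) ∈ activePairs H u k :=
      (mem_activePairs H u).2 ⟨⟨ha, haM.symm⟩, mem_filter.1 hz⟩
    have := sub_le_oscSlope H u hq (-ind z)
    norm_num [ind, fst_ne_snd_of_mem_activePairs H u hk hq, h0 k] at this
  have h0 := hu.oscSlope_sum_eq_zero hp S ind
    (fun z hz x hx => if_neg (ne_of_mem_of_not_mem hx fun hL => hSD z hz (Or.inl hL))) hflat hk
  have : oscSlope H u (∑ z ∈ S, ind z) k ≤ -1 := oscSlope_le H u fun q hq => by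
    have hS₂ : q.2 ∈ S := mem_filter.2 ((mem_activePairs H u).1 hq).2
    have hS₁ : q.1 ∉ S := fun h => by
      linarith [(mem_filter.1 h).2, (mem_filter.1 hS₂).2, apply_snd_lt_apply_fst H u hk hq]
    rw [sum_ind_apply, sum_ind_apply, if_neg hS₁, if_pos hS₂]
    norm_num
  linarith

theorem IsMinimizer.sSup_image_eq_sup' [DecidableEq V] (hp : 1 < p)
    (hu : IsMinimizer H p L y u) {k : Fin m} (hk : 0 < osc H u k) :
    sSup (u '' {z | z ∈ H.e k ∧ z ∈ Dset H p L u}) = (H.e k).sup' (H.e_nonempty k) u := by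
  obtain ⟨a, ha, haD, haM⟩ := hu.exists_mem_Dset_eq_sup' hp hk
  exact IsGreatest.csSup_eq ⟨⟨a, ⟨ha, haD⟩, haM⟩, by rintro _ ⟨z, ⟨hz, -⟩, rfl⟩; exact le_sup' u hz⟩

theorem IsMinimizer.sInf_image_eq_inf' [DecidableEq V] (hp : 1 < p)
    (hu : IsMinimizer H p L y u) {k : Fin m} (hk : 0 < osc H u k) :
    sInf (u '' {z | z ∈ H.e k ∧ z ∈ Dset H p L u}) = (H.e k).inf' (H.e_nonempty k) u := by
  obtain ⟨b, hb, hbD, hbm⟩ := hu.exists_mem_Dset_eq_inf' hp hk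
  exact IsLeast.csInf_eq ⟨⟨b, ⟨hb, hbD⟩, hbm⟩, by rintro _ ⟨z, ⟨hz, -⟩, rfl⟩; exact inf'_le u hz⟩

theorem IsMinimizer.exists_mem_activeFace_sum_eq_zero [DecidableEq V] (hp : 1 < p)
    (hu : IsMinimizer H p L y u) :
    ∃ β : Fin m → V → ℝ, (∀ k, β k ∈ activeFace H u k) ∧
      ∀ x ∉ L, ∑ k, H.w k * osc H u k ^ (p - 1) * β k x = 0 := by
  let Φ : (Fin m → V → ℝ) →ₗ[ℝ] V → ℝ := ∑ k, (H.w k * osc H u k ^ (p - 1)) • LinearMap.proj k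
  have hΦ : ∀ β, Φ β = ∑ k, (H.w k * osc H u k ^ (p - 1)) • β k := fun β => by simp [Φ]
  have hdir : ∀ v : V → ℝ, (∀ x ∈ L, v x = 0) →
      ∃ g ∈ Φ '' Set.univ.pi (activeFace H u), 0 ≤ g ⬝ᵥ v := by
    intro v hv
    choose q hq hqv using fun k =>
      exists_mem_eq_sup' (activePairs_nonempty H u k) fun q : V × V => v q.1 - v q.2
    refine ⟨Φ fun k => ind (q k).1 - ind (q k).2,
      Set.mem_image_of_mem _ fun k _ => subset_convexHull ℝ _ (Set.mem_image_of_mem _ (hq k)), ?_⟩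
    rw [hΦ, sum_dotProduct]
    refine (hu.sum_mul_oscSlope_nonneg hp hv).trans_eq (sum_congr rfl fun k _ => ?_)
    rw [smul_dotProduct, smul_eq_mul, oscSlope, hqv]
    exact congrArg _ (ip_ind_sub_ind _ _ v).symm
  obtain ⟨_, ⟨β, hβ, rfl⟩, hβL⟩ := exists_mem_eq_zero_off_of_dotProduct_nonneg
    ((isCompact_univ_pi fun k => ((activePairs H u k).finite_toSet.image
      fun q : V × V => ind q.1 - ind q.2).isCompact_convexHull ℝ).image
      Φ.continuous_of_finiteDimensional)
    ((convex_pi fun k _ => convex_convexHull ℝ _).linear_image Φ) L hdir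
  exact ⟨β, fun k => hβ k (Set.mem_univ k), fun x hx => by simpa [hΦ] using hβL x hx⟩

theorem IsMinimizer.mul_abs_mul_phiP_eq [DecidableEq V] (hp : 1 < p) (hu : IsMinimizer H p L y u)
    {k : Fin m} (hk : 0 < osc H u k) {g : V → ℝ} (hg : g ∈ activeFace H u k) (x : V) :
    H.w k * |g x| * phiP p (sSup (u '' {z | z ∈ H.e k ∧ z ∈ Dset H p L u}) +
      sInf (u '' {z | z ∈ H.e k ∧ z ∈ Dset H p L u}) - 2 * u x) =
        -(H.w k * osc H u k ^ (p - 1) * g x) := by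
  rw [hu.sSup_image_eq_sup' hp hk, hu.sInf_image_eq_inf' hp hk, mul_assoc,
    abs_mul_phiP_of_mem_activeFace p hk hg]
  ring

end Minimizer

theorem minimizer_solves_pLaplacian_on_D_general [DecidableEq V] (H : WeightedHypergraph V m) (p : ℝ)
    (hp : 1 < p) (L : Finset V) (y u : V → ℝ)
    (hu : IsMinimizer H p L y u) :
    ∃ β : Fin m → (V → ℝ),
      (∀ k : Fin m, β k ∈ Bset (H.e k) ∧ ∀ b ∈ Bset (H.e k), ip b u ≤ ip (β k) u) ∧
      ∀ x ∈ Dset H p L u, x ∉ L →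
        ∑ k ∈ Finset.univ.filter (fun k => x ∈ H.e k),
          H.w k * |β k x| *
            phiP p (sSup (u '' {z | z ∈ H.e k ∧ z ∈ Dset H p L u}) +
                    sInf (u '' {z | z ∈ H.e k ∧ z ∈ Dset H p L u}) - 2 * u x) = 0 := by
  obtain ⟨β, hβ, hbal⟩ := hu.exists_mem_activeFace_sum_eq_zero hp
  -- On an edge where `u` is constant the face is all of `B_k` and `e_k ∩ D` may be empty
  -- (so that `sSup` and `sInf` are junk); `β_k = 0` is the right choice there.
  refine ⟨fun k => if 0 < osc H u k then β k else 0, fun k => ?_, fun x _ hx => ?_⟩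
  · dsimp only
    split_ifs with hk
    · exact ⟨activeFace_subset_Bset (hβ k), fun b hb =>
        (ip_le_osc_of_mem_Bset H u hb).trans (ip_eq_osc_of_mem_activeFace (hβ k)).ge⟩
    · refine ⟨zero_mem_Bset (H.e_nonempty k), fun b hb => ?_⟩
      simpa [ip, le_antisymm (not_lt.1 hk) (osc_nonneg H u k)] using ip_le_osc_of_mem_Bset H u hb
  calc _ = -∑ k, H.w k * osc H u k ^ (p - 1) * β k x := by
        rw [← sum_neg_distrib, sum_filter]
        refine sum_congr rfl fun k _ => ?_
        by_cases hk : 0 < osc H u k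
        · by_cases hxk : x ∈ H.e k
          · simp only [if_pos hk, if_pos hxk, hu.mul_abs_mul_phiP_eq hp hk (hβ k)]
          · simp [hxk, apply_eq_zero_of_mem_activeFace (hβ k) hxk]
        · simp [le_antisymm (not_lt.1 hk) (osc_nonneg H u k), Real.zero_rpow (sub_pos.2 hp).ne']
    _ = 0 := by rw [hbal x hx, neg_zero]

/-- a minimizer of `F_H^{con}` solves the hypergraph p-Laplacian equation
on `D \ L`, with diffusion coefficients `|β_k(x_i)|` coming from maximizers
`β_k ∈ argmax_{b ∈ B_k} ⟨b, u⟩`, and maxima/minima taken over `e_k ∩ D`. -/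
theorem minimizer_solves_pLaplacian_on_D [DecidableEq V] (H : WeightedHypergraph V m) (p : ℝ)
    (hp : 1 < p) (L : Finset V) (hL : L.Nonempty) (y u : V → ℝ)
    (hu : IsMinimizer H p L y u) :
    ∃ β : Fin m → (V → ℝ),
      (∀ k : Fin m, β k ∈ Bset (H.e k) ∧ ∀ b ∈ Bset (H.e k), ip b u ≤ ip (β k) u) ∧
      ∀ x ∈ Dset H p L u, x ∉ L →
        ∑ k ∈ Finset.univ.filter (fun k => x ∈ H.e k),
          H.w k * |β k x| *
            phiP p (sSup (u '' {z | z ∈ H.e k ∧ z ∈ Dset H p L u}) +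
                    sInf (u '' {z | z ∈ H.e k ∧ z ∈ Dset H p L u}) - 2 * u x) = 0 :=
  minimizer_solves_pLaplacian_on_D_general H p hp L y u hu
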